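/- arXiv:2110.09906 — 2 statements merged into one kernel-verified Lean document; each statement's English description precedes it below -/
import Mathlib

section
/- Let n be a positive integer. Then in ℚ(q), ∑_{j=1}^{n-1} 1/(1 - q^j) ≡ (n-1)/2 + (n^2-1)(1 - q^n)/24 (mod Φ_n(q)^2). -/
open Finset Polynomial

/-- The variable `q` of the field of rational functions `ℚ(q)`. -/
noncomputable def q : RatFunc ℚ := RatFunc.X

/-- The `q`-shifted factorial `(q;q)_m = ∏_{i=1}^{m} (1 - q^i)` as an element of `ℚ(q)`. -/
noncomputable def qPoch (m : ℕ) : RatFunc ℚ := ∏ i ∈ Finset.range m, (1 - q ^ (i + 1))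

/-- The Gaussian `q`-binomial coefficient `[m choose k]_q`, viewed in `ℚ(q)`. -/
noncomputable def qbinom (m k : ℕ) : RatFunc ℚ :=
  if k ≤ m then qPoch m / (qPoch k * qPoch (m - k)) else 0

/-- The `q`-integer `[n] = 1 + q + ⋯ + q^{n-1}` as a polynomial in `ℚ[q]`. -/
noncomputable def qint (n : ℕ) : Polynomial ℚ := ∑ i ∈ Finset.range n, Polynomial.X ^ i

/-- The `q`-integer `[n]` viewed in `ℚ(q)`. -/
noncomputable def qintR (n : ℕ) : RatFunc ℚ :=
  algebraMap (Polynomial ℚ) (RatFunc ℚ) (qint n)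

/-- `A ≡ B (mod P)` for rational functions `A, B ∈ ℚ(q)` and a polynomial `P`:
`A - B` can be written as a fraction `a / b` of polynomials whose numerator `a` is
divisible by `P` and whose denominator `b` is coprime to `P`. -/
def ratModEq (P : Polynomial ℚ) (A B : RatFunc ℚ) : Prop :=
  ∃ a b : Polynomial ℚ, IsCoprime b P ∧ P ∣ a ∧
    A - B = algebraMap (Polynomial ℚ) (RatFunc ℚ) a / algebraMap (Polynomial ℚ) (RatFunc ℚ) b


lemma range_eq_insert_Icc (n : ℕ) (hn : 0 < n) :
    Finset.range n = insert 0 (Finset.Icc 1 (n-1)) := by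
  ext x; simp only [Finset.mem_range, Finset.mem_insert, Finset.mem_Icc]; omega

lemma sum_pow_eq_zero {x : ℂ} {n : ℕ} (h1 : x ^ n = 1) (hx : x ≠ 1) :
    ∑ k ∈ range n, x ^ k = 0 := by
  rw [geom_sum_eq hx, h1]; simp

lemma sum_mul_pow {x : ℂ} {n : ℕ} (h1 : x ^ n = 1) (hx : x ≠ 1) :
    ∑ k ∈ range n, (k:ℂ) * x ^ k = n / (x - 1) := by
  have hx1 : x - 1 ≠ 0 := sub_ne_zero.2 hx
  rw [eq_div_iff hx1]
  have t1 : ∑ k ∈ range n, (((k:ℂ)+1) * x ^ (k+1) - (k:ℂ) * x ^ k)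
      = (n:ℂ) * x ^ n - 0 * x ^ 0 := by
    have := Finset.sum_range_sub (fun k => (k:ℂ) * x ^ k) n
    simpa using this
  have t2 : ∑ k ∈ range n, x ^ (k+1) = 0 := by
    have : ∑ k ∈ range n, x ^ (k+1) = x * ∑ k ∈ range n, x ^ k := by
      rw [Finset.mul_sum]; exact Finset.sum_congr rfl fun k _ => by ring
    rw [this, sum_pow_eq_zero h1 hx, mul_zero]
  have t3 : ∀ k : ℕ, (k:ℂ) * x ^ k * (x - 1)
      = (((k:ℂ)+1) * x ^ (k+1) - (k:ℂ) * x ^ k) - x ^ (k+1) := by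
    intro k; ring
  calc (∑ k ∈ range n, (k:ℂ) * x ^ k) * (x - 1)
      = ∑ k ∈ range n, ((((k:ℂ)+1) * x ^ (k+1) - (k:ℂ) * x ^ k) - x ^ (k+1)) := by
        rw [Finset.sum_mul]; exact Finset.sum_congr rfl fun k _ => t3 k
    _ = (∑ k ∈ range n, (((k:ℂ)+1) * x ^ (k+1) - (k:ℂ) * x ^ k)) - ∑ k ∈ range n, x ^ (k+1) := by
        rw [Finset.sum_sub_distrib]
    _ = (n:ℂ) := by
        rw [t2, sub_zero]
        rw [t1, h1]; ring

lemma sum_cast_range (n : ℕ) : ∑ k ∈ range n, (k:ℂ) = n*(n-1)/2 := by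
  induction n with
  | zero => simp
  | succ m ih => rw [Finset.sum_range_succ, ih]; push_cast; ring

lemma sum_sq_range (n : ℕ) : ∑ k ∈ range n, (k:ℂ)^2 = n*(n-1)*(2*n-1)/6 := by
  induction n with
  | zero => simp
  | succ m ih => rw [Finset.sum_range_succ, ih]; push_cast; ring

lemma innerOrtho {n : ℕ} (hn : 0 < n) {μ : ℂ} (hμ : IsPrimitiveRoot μ n) {k l : ℕ}
    (hk : k < n) (hl : l < n) :
    ∑ j ∈ Icc 1 (n-1), (μ^j)^k * (μ^(n-j))^l = if k = l then (n:ℂ) - 1 else -1 := by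
  have hμ0 : μ ≠ 0 := hμ.ne_zero hn.ne'
  by_cases hkl : k = l
  · subst hkl
    rw [if_pos rfl]
    have : ∀ j ∈ Icc 1 (n-1), (μ^j)^k * (μ^(n-j))^k = 1 := by
      intro j hj
      rw [Finset.mem_Icc] at hj
      rw [← pow_mul, ← pow_mul, ← pow_add,
        show j*k+(n-j)*k = n*k by rw [← add_mul]; congr 1; omega,
        pow_mul, hμ.pow_eq_one, one_pow]
    rw [Finset.sum_congr rfl this, Finset.sum_const, Nat.card_Icc]
    simp only [nsmul_eq_mul, mul_one]
    have : ((n - 1 + 1 - 1 : ℕ) : ℂ) = (n:ℂ) - 1 := by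
      rw [show n - 1 + 1 - 1 = n - 1 by omega, Nat.cast_sub hn]; simp
    rw [this]
  · rw [if_neg hkl]
    have hb : (μ:ℂ)^l ≠ 0 := pow_ne_zero _ hμ0
    set x : ℂ := μ^k * (μ^l)⁻¹ with hxdef
    have hx1 : x ≠ 1 := by
      intro h
      rw [hxdef, mul_inv_eq_one₀ hb] at h
      exact hkl (hμ.pow_inj hk hl h)
    have hpn : ∀ m : ℕ, (μ^m)^n = 1 := by
      intro m; rw [← pow_mul, mul_comm, pow_mul, hμ.pow_eq_one, one_pow]
    have hxn : x ^ n = 1 := by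
      rw [hxdef, mul_pow, inv_pow, hpn, hpn, inv_one, mul_one]
    have hterm : ∀ j ∈ Icc 1 (n-1), (μ^j)^k * (μ^(n-j))^l = x^j := by
      intro j hj
      rw [Finset.mem_Icc] at hj
      have hle : j*l ≤ n*l := Nat.mul_le_mul_right _ (by omega)
      rw [← pow_mul, ← pow_mul, Nat.sub_mul n j l, pow_sub₀ μ hμ0 hle, pow_mul μ n l, hμ.pow_eq_one, one_pow,
        one_mul, hxdef, mul_pow, inv_pow, ← pow_mul, ← pow_mul, mul_comm k j, mul_comm l j]
    rw [Finset.sum_congr rfl hterm]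
    have h0 : (0:ℂ) = ∑ j ∈ range n, x ^ j := by
      rw [geom_sum_eq hx1, hxn]; simp
    rw [range_eq_insert_Icc n hn, Finset.sum_insert (by simp)] at h0
    simp only [pow_zero] at h0
    linear_combination -h0

lemma key_complex {n : ℕ} (hn : 0 < n) {μ : ℂ} (hμ : IsPrimitiveRoot μ n) :
    ∑ j ∈ Icc 1 (n-1), ((1 - μ^j) * (1 - μ^(n-j)))⁻¹ = ((n:ℂ)^2 - 1)/12 := by
  have hn0 : (n:ℂ) ≠ 0 := Nat.cast_ne_zero.2 hn.ne'
  have hne1 : ∀ m ∈ Icc 1 (n-1), μ^m ≠ 1 := by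
    intro m hm h
    rw [Finset.mem_Icc] at hm
    have := Nat.le_of_dvd (by omega) (hμ.dvd_of_pow_eq_one m h)
    omega
  have hpn : ∀ m : ℕ, (μ^m)^n = 1 := by
    intro m; rw [← pow_mul, mul_comm, pow_mul, hμ.pow_eq_one, one_pow]
  have hinv : ∀ m ∈ Icc 1 (n-1),
      (1 - μ^m)⁻¹ = -(1/(n:ℂ)) * ∑ k ∈ range n, (k:ℂ) * (μ^m)^k := by
    intro m hm
    have hx := hne1 m hm
    rw [sum_mul_pow (hpn m) hx]
    have h1 : μ^m - 1 ≠ 0 := sub_ne_zero.2 hx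
    have h2 : (1:ℂ) - μ^m ≠ 0 := sub_ne_zero.2 (Ne.symm hx)
    field_simp
    ring
  have hmem : ∀ j ∈ Icc 1 (n-1), n - j ∈ Icc 1 (n-1) := by
    intro j hj; rw [Finset.mem_Icc] at *; omega
  have step1 : ∑ j ∈ Icc 1 (n-1), ((1 - μ^j) * (1 - μ^(n-j)))⁻¹
      = ∑ j ∈ Icc 1 (n-1), (1/(n:ℂ)^2) * ∑ k ∈ range n, ∑ l ∈ range n,
          ((k:ℂ)*(l:ℂ)) * ((μ^j)^k * (μ^(n-j))^l) := by
    refine Finset.sum_congr rfl fun j hj => ?_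
    have expand : (∑ k ∈ range n, (k:ℂ) * (μ^j)^k) * (∑ l ∈ range n, (l:ℂ) * (μ^(n-j))^l)
        = ∑ k ∈ range n, ∑ l ∈ range n, ((k:ℂ)*(l:ℂ)) * ((μ^j)^k * (μ^(n-j))^l) := by
      rw [Finset.sum_mul_sum]
      exact Finset.sum_congr rfl fun k _ => Finset.sum_congr rfl fun l _ => by ring
    rw [mul_inv, hinv j hj, hinv _ (hmem j hj), ← expand]
    ring
  rw [step1, ← Finset.mul_sum]
  have step2 : ∑ j ∈ Icc 1 (n-1), ∑ k ∈ range n, ∑ l ∈ range n,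
        ((k:ℂ)*(l:ℂ)) * ((μ^j)^k * (μ^(n-j))^l)
      = ∑ k ∈ range n, ∑ l ∈ range n, ((k:ℂ)*(l:ℂ)) * (if k = l then (n:ℂ) - 1 else -1) := by
    rw [Finset.sum_comm]
    refine Finset.sum_congr rfl fun k hk => ?_
    rw [Finset.sum_comm]
    refine Finset.sum_congr rfl fun l hl => ?_
    rw [← Finset.mul_sum, innerOrtho hn hμ (Finset.mem_range.1 hk) (Finset.mem_range.1 hl)]
  rw [step2]
  have step3 : ∑ k ∈ range n, ∑ l ∈ range n, ((k:ℂ)*(l:ℂ)) * (if k = l then (n:ℂ) - 1 else -1)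
      = (n:ℂ) * (∑ k ∈ range n, (k:ℂ)^2) - (∑ k ∈ range n, (k:ℂ)) * (∑ k ∈ range n, (k:ℂ)) := by
    have pointwise : ∀ k l : ℕ, ((k:ℂ)*(l:ℂ)) * (if k = l then (n:ℂ) - 1 else -1)
        = (n:ℂ) * (if k = l then (k:ℂ)*(l:ℂ) else 0) - (k:ℂ)*(l:ℂ) := by
      intro k l; split_ifs <;> ring
    calc ∑ k ∈ range n, ∑ l ∈ range n, ((k:ℂ)*(l:ℂ)) * (if k = l then (n:ℂ) - 1 else -1)
        = ∑ k ∈ range n, (((n:ℂ) * ∑ l ∈ range n, (if k = l then (k:ℂ)*(l:ℂ) else 0))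
            - ∑ l ∈ range n, (k:ℂ)*(l:ℂ)) := by
          refine Finset.sum_congr rfl fun k hk => ?_
          rw [Finset.mul_sum, ← Finset.sum_sub_distrib]
          exact Finset.sum_congr rfl fun l _ => pointwise k l
      _ = ∑ k ∈ range n, ((n:ℂ) * ((k:ℂ)*(k:ℂ)) - (k:ℂ) * ∑ l ∈ range n, (l:ℂ)) := by
          refine Finset.sum_congr rfl fun k hk => ?_
          rw [Finset.sum_ite_eq, if_pos hk, Finset.mul_sum]
      _ = (n:ℂ) * (∑ k ∈ range n, (k:ℂ)^2) - (∑ k ∈ range n, (k:ℂ)) * (∑ k ∈ range n, (k:ℂ)) := by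
          rw [Finset.sum_sub_distrib, ← Finset.mul_sum, ← Finset.sum_mul]
          congr 1
          · congr 1; exact Finset.sum_congr rfl fun k _ => by ring
  rw [step3, sum_cast_range, sum_sq_range]
  field_simp
  ring
lemma one_sub_X_pow_ne_zero {j : ℕ} (hj : 0 < j) : (1 - X^j : Polynomial ℚ) ≠ 0 := by
  intro h
  have h1 : (1 : Polynomial ℚ) = X ^ j := sub_eq_zero.mp h
  have := congrArg natDegree h1
  rw [natDegree_one, natDegree_X_pow] at this
  omega

lemma one_sub_q_pow_ne_zero {j : ℕ} (hj : 0 < j) : (1 : RatFunc ℚ) - q ^ j ≠ 0 := by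
  have : (1 : RatFunc ℚ) - q ^ j
      = algebraMap (Polynomial ℚ) (RatFunc ℚ) (1 - X ^ j) := by
    rw [map_sub, map_one, map_pow, RatFunc.algebraMap_X]; rfl
  rw [this]
  exact RatFunc.algebraMap_ne_zero (one_sub_X_pow_ne_zero hj)


/-- Equation (1.7) (Shi–Pan): for a positive integer `n`,
`∑_{j=1}^{n-1} 1/(1-q^j) ≡ (n-1)/2 + (n²-1)(1-q^n)/24  (mod Φ_n(q)²)`. -/
theorem qharmonic_mod_cyclotomic_sq (n : ℕ) (hn : 0 < n) :
    ratModEq ((Polynomial.cyclotomic n ℚ) ^ 2)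
      (∑ j ∈ Finset.Icc 1 (n - 1), 1 / (1 - q ^ j))
      (RatFunc.C (((n : ℚ) - 1) / 2) +
        RatFunc.C (((n : ℚ) ^ 2 - 1) / 24) * (1 - q ^ n)) := by
  classical
  set μ : ℂ := Complex.exp (2 * Real.pi * Complex.I / n) with hμdef
  have hμ : IsPrimitiveRoot μ n := Complex.isPrimitiveRoot_exp n hn.ne'
  set Φ : Polynomial ℚ := cyclotomic n ℚ with hΦ
  have hroot : aeval μ Φ = 0 := by
    rw [hΦ, cyclotomic_eq_minpoly_rat hμ hn]; exact minpoly.aeval ℚ μ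
  have hμpow_ne : ∀ m, 1 ≤ m → m ≤ n - 1 → μ ^ m ≠ 1 := by
    intro m h1 h2 h
    have := Nat.le_of_dvd (by omega) (hμ.dvd_of_pow_eq_one m h)
    omega
  set g : ℕ → Polynomial ℚ := fun j => (1 - X^j) * (1 - X^(n-j)) with hg
  set b₁ : Polynomial ℚ := ∏ j ∈ Finset.Icc 1 (n-1), g j with hb₁
  set num : Polynomial ℚ := ∑ j ∈ Finset.Icc 1 (n-1), ∏ k ∈ (Finset.Icc 1 (n-1)).erase j, g k
    with hnum
  set c : ℚ := ((n:ℚ)^2 - 1)/12 with hc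
  have hmem : ∀ j ∈ Finset.Icc 1 (n-1), 1 ≤ j ∧ j ≤ n-1 ∧ 1 ≤ n - j ∧ n - j ≤ n - 1 := by
    intro j hj; rw [Finset.mem_Icc] at hj; omega
  have hgne : ∀ j ∈ Finset.Icc 1 (n-1), g j ≠ 0 := by
    intro j hj
    obtain ⟨h1, h2, h3, h4⟩ := hmem j hj
    exact mul_ne_zero (one_sub_X_pow_ne_zero h1) (one_sub_X_pow_ne_zero h3)
  have hb₁ne : b₁ ≠ 0 := Finset.prod_ne_zero_iff.2 hgne
  have haevalg : ∀ j, aeval μ (g j) = (1 - μ^j) * (1 - μ^(n-j)) := by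
    intro j; simp [hg]
  have hGne : ∀ j ∈ Finset.Icc 1 (n-1), (1 - μ^j) * (1 - μ^(n-j)) ≠ 0 := by
    intro j hj
    obtain ⟨h1, h2, h3, h4⟩ := hmem j hj
    exact mul_ne_zero (sub_ne_zero.2 (Ne.symm (hμpow_ne j h1 h2)))
      (sub_ne_zero.2 (Ne.symm (hμpow_ne _ h3 h4)))
  refine ⟨C (-(1:ℚ)/2) * ((X : Polynomial ℚ)^n - 1) * (num - C c * b₁), b₁, ?_, ?_, ?_⟩
  · -- coprimality
    have hirr : Irreducible Φ := cyclotomic.irreducible_rat hn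
    have hnd : ¬ Φ ∣ b₁ := by
      intro hd
      obtain ⟨j, hj, hdj⟩ := (hirr.prime.dvd_finset_prod_iff g).1 hd
      obtain ⟨h1, h2, h3, h4⟩ := hmem j hj
      have key : ∀ m, 1 ≤ m → m ≤ n - 1 → ¬ Φ ∣ (1 - X^m) := by
        intro m hm1 hm2 hdvd
        obtain ⟨r, hr⟩ := hdvd
        have h0 : aeval μ (1 - X^m : Polynomial ℚ) = 0 := by
          rw [hr, map_mul, hroot, zero_mul]
        simp only [map_sub, map_one, map_pow, aeval_X] at h0
        exact hμpow_ne m hm1 hm2 (sub_eq_zero.mp h0).symm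
      rcases hirr.prime.dvd_mul.1 hdj with h | h
      exacts [key j h1 h2 h, key _ h3 h4 h]
    exact ((hirr.coprime_iff_not_dvd.2 hnd).symm).pow_right
  · -- divisibility by Φ²
    have d1 : Φ ∣ (X : Polynomial ℚ)^n - 1 := cyclotomic.dvd_X_pow_sub_one n ℚ
    have d2 : Φ ∣ num - C c * b₁ := by
      rw [hΦ, cyclotomic_eq_minpoly_rat hμ hn]
      apply minpoly.dvd
      have hB : aeval μ b₁ = ∏ j ∈ Finset.Icc 1 (n-1), ((1 - μ^j) * (1 - μ^(n-j))) := by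
        rw [hb₁, map_prod]; exact Finset.prod_congr rfl fun j _ => haevalg j
      have hN : aeval μ num = ∑ j ∈ Finset.Icc 1 (n-1),
          ((1 - μ^j) * (1 - μ^(n-j)))⁻¹
            * ∏ k ∈ Finset.Icc 1 (n-1), ((1 - μ^k) * (1 - μ^(n-k))) := by
        rw [hnum, map_sum]
        refine Finset.sum_congr rfl fun j hj => ?_
        rw [map_prod]
        have he : ∏ k ∈ (Finset.Icc 1 (n-1)).erase j, aeval μ (g k)
            = ∏ k ∈ (Finset.Icc 1 (n-1)).erase j, ((1 - μ^k) * (1 - μ^(n-k))) :=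
          Finset.prod_congr rfl fun k _ => haevalg k
        rw [he, ← Finset.mul_prod_erase _ _ hj, inv_mul_cancel_left₀ (hGne j hj)]
      have haevalc : aeval μ (C c : Polynomial ℚ) = ((n:ℂ)^2 - 1)/12 := by
        rw [aeval_C, hc]
        push_cast
        norm_num
      rw [map_sub, map_mul, hN, hB, haevalc, ← Finset.sum_mul, key_complex hn hμ]
      ring
    calc Φ^2 = Φ * Φ := sq Φ
    _ ∣ ((X : Polynomial ℚ)^n - 1) * (num - C c * b₁) := mul_dvd_mul d1 d2
    _ ∣ C (-(1:ℚ)/2) * ((X : Polynomial ℚ)^n - 1) * (num - C c * b₁) :=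
        ⟨C (-(1:ℚ)/2), by ring⟩
  · -- the congruence identity
    have hBne : algebraMap (Polynomial ℚ) (RatFunc ℚ) b₁ ≠ 0 :=
      RatFunc.algebraMap_ne_zero hb₁ne
    have hAg : ∀ j, algebraMap (Polynomial ℚ) (RatFunc ℚ) (g j)
        = (1 - q^j) * (1 - q^(n-j)) := by
      intro j
      simp only [hg, map_mul, map_sub, map_one, map_pow, RatFunc.algebraMap_X, q]
    set W : RatFunc ℚ := ∑ j ∈ Finset.Icc 1 (n-1), ((1 - q^j) * (1 - q^(n-j)))⁻¹ with hW
    have E2 : W * algebraMap (Polynomial ℚ) (RatFunc ℚ) b₁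
        = algebraMap (Polynomial ℚ) (RatFunc ℚ) num := by
      rw [hW, Finset.sum_mul, hnum, map_sum]
      refine Finset.sum_congr rfl fun j hj => ?_
      have hAgne : algebraMap (Polynomial ℚ) (RatFunc ℚ) (g j) ≠ 0 :=
        RatFunc.algebraMap_ne_zero (hgne j hj)
      have hsplit : algebraMap (Polynomial ℚ) (RatFunc ℚ)
            (g j * ∏ k ∈ (Finset.Icc 1 (n-1)).erase j, g k)
          = algebraMap (Polynomial ℚ) (RatFunc ℚ) (g j)
            * algebraMap (Polynomial ℚ) (RatFunc ℚ) (∏ k ∈ (Finset.Icc 1 (n-1)).erase j, g k) :=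
        map_mul _ _ _
      rw [← hAg j, hb₁, ← Finset.mul_prod_erase _ _ hj, hsplit, inv_mul_cancel_left₀ hAgne]
    have hswap : (∑ j ∈ Finset.Icc 1 (n-1), 1 / (1 - q^j))
        = ∑ j ∈ Finset.Icc 1 (n-1), 1 / (1 - q^(n-j)) := by
      apply Finset.sum_nbij' (i := fun j => n - j) (j := fun j => n - j)
      · intro a ha; rw [Finset.mem_Icc] at *; omega
      · intro a ha; rw [Finset.mem_Icc] at *; omega
      · intro a ha; rw [Finset.mem_Icc] at ha; omega
      · intro a ha; rw [Finset.mem_Icc] at ha; omega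
      · intro a ha
        rw [Finset.mem_Icc] at ha
        rw [show n - (n - a) = a by omega]
    have pointwise : ∀ j ∈ Finset.Icc 1 (n-1), 1 / (1 - q^j) + 1 / (1 - q^(n-j))
        = 1 - (q^n - 1) * ((1 - q^j) * (1 - q^(n-j)))⁻¹ := by
      intro j hj
      obtain ⟨h1, h2, h3, h4⟩ := hmem j hj
      have d1 := one_sub_q_pow_ne_zero h1
      have d2 := one_sub_q_pow_ne_zero h3
      have hpow : q^j * q^(n-j) = q^n := by
        rw [← pow_add]; congr 1; omega
      rw [← hpow]
      field_simp
      ring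
    have E1 : (∑ j ∈ Finset.Icc 1 (n-1), 1 / (1 - q^j))
          + (∑ j ∈ Finset.Icc 1 (n-1), 1 / (1 - q^j))
        = RatFunc.C ((n:ℚ) - 1) - (q^n - 1) * W := by
      calc (∑ j ∈ Finset.Icc 1 (n-1), 1 / (1 - q^j))
            + (∑ j ∈ Finset.Icc 1 (n-1), 1 / (1 - q^j))
          = ∑ j ∈ Finset.Icc 1 (n-1), (1 / (1 - q^j) + 1 / (1 - q^(n-j))) := by
            rw [Finset.sum_add_distrib, ← hswap]
        _ = ∑ j ∈ Finset.Icc 1 (n-1), (1 - (q^n - 1) * ((1 - q^j) * (1 - q^(n-j)))⁻¹) :=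
            Finset.sum_congr rfl pointwise
        _ = RatFunc.C ((n:ℚ) - 1) - (q^n - 1) * W := by
            rw [Finset.sum_sub_distrib, ← Finset.mul_sum, Finset.sum_const, Nat.card_Icc,
              ← hW]
            congr 1
            rw [show n - 1 + 1 - 1 = n - 1 by omega]
            rw [show ((n:ℚ) - 1) = ((n-1 : ℕ) : ℚ) by rw [Nat.cast_sub hn]; norm_num,
              map_natCast]
            simp
    have hCn : RatFunc.C ((n:ℚ) - 1) = 2 * RatFunc.C (((n:ℚ) - 1)/2) := by
      rw [← map_ofNat (RatFunc.C) 2, ← map_mul]; congr 1; ring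
    have hCh : (2 : RatFunc ℚ) * RatFunc.C (1/2 : ℚ) = 1 := by
      rw [← map_ofNat (RatFunc.C) 2, ← map_mul, ← map_one (RatFunc.C)]; norm_num
    have hS : (∑ j ∈ Finset.Icc 1 (n-1), 1 / (1 - q^j))
        = RatFunc.C (((n:ℚ) - 1)/2) - RatFunc.C (1/2 : ℚ) * ((q^n - 1) * W) := by
      have h2poly : (2 : Polynomial ℚ) ≠ 0 := by norm_num
      have h2K : (2 : RatFunc ℚ) ≠ 0 := by
        rw [← map_ofNat (algebraMap (Polynomial ℚ) (RatFunc ℚ)) 2]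
        exact RatFunc.algebraMap_ne_zero h2poly
      apply mul_left_cancel₀ h2K
      calc (2 : RatFunc ℚ) * (∑ j ∈ Finset.Icc 1 (n-1), 1 / (1 - q^j))
          = (∑ j ∈ Finset.Icc 1 (n-1), 1 / (1 - q^j))
            + (∑ j ∈ Finset.Icc 1 (n-1), 1 / (1 - q^j)) := by ring
        _ = RatFunc.C ((n:ℚ) - 1) - (q^n - 1) * W := E1
        _ = 2 * (RatFunc.C (((n:ℚ) - 1)/2) - RatFunc.C (1/2 : ℚ) * ((q^n - 1) * W)) := by
            rw [hCn]
            linear_combination ((q^n - 1) * W) * hCh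
    have ha : algebraMap (Polynomial ℚ) (RatFunc ℚ)
          (C (-(1:ℚ)/2) * ((X : Polynomial ℚ)^n - 1) * (num - C c * b₁))
        = RatFunc.C (-(1:ℚ)/2) * (q^n - 1)
          * (algebraMap (Polynomial ℚ) (RatFunc ℚ) num
              - RatFunc.C c * algebraMap (Polynomial ℚ) (RatFunc ℚ) b₁) := by
      simp only [map_mul, map_sub, map_pow, map_one, RatFunc.algebraMap_X,
        RatFunc.algebraMap_C, q]
    have hneg : RatFunc.C (-(1:ℚ)/2) = - RatFunc.C (1/2 : ℚ) := by
      rw [← map_neg]; norm_num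
    have hcc : RatFunc.C (1/2 : ℚ) * RatFunc.C c = RatFunc.C (((n:ℚ)^2 - 1)/24) := by
      rw [← map_mul]; congr 1; rw [hc]; ring
    rw [eq_div_iff hBne, hS, ha]
    linear_combination (-(RatFunc.C (1/2 : ℚ)) * (q^n - 1)) * E2
      + ((-(q^n - 1)) * algebraMap (Polynomial ℚ) (RatFunc ℚ) num
          + (q^n - 1) * RatFunc.C c * algebraMap (Polynomial ℚ) (RatFunc ℚ) b₁) * hneg
      + (-(q^n - 1) * algebraMap (Polynomial ℚ) (RatFunc ℚ) b₁) * hcc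
end

section
/- Let n be a positive integer and 0 ≤ k ≤ n-1. Then in ℚ(q), [n+k choose k]_q · [n-1 choose k]_q ≡ (-1)^k q^{nk - k(k+1)/2} · (1 − ((1-q^n)^2/q^n) · ∑_{j=1}^{k} q^j/(1-q^j)^2) (mod Φ_n(q)^4). -/
open Finset Polynomial

lemma q_eq : q = algebraMap (Polynomial ℚ) (RatFunc ℚ) X := (RatFunc.algebraMap_X).symm

lemma q_pow (m : ℕ) : q ^ m = algebraMap (Polynomial ℚ) (RatFunc ℚ) (X ^ m) := by
  rw [map_pow, q_eq]

lemma q_ne_zero : q ≠ 0 := by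
  rw [q_eq]; exact RatFunc.algebraMap_ne_zero Polynomial.X_ne_zero

lemma one_sub_q_pow_ne_zero_s5 {m : ℕ} (hm : 0 < m) : 1 - q ^ m ≠ 0 := by
  have h : (1 : RatFunc ℚ) - q ^ m = algebraMap (Polynomial ℚ) (RatFunc ℚ) (1 - X ^ m) := by
    rw [map_sub, map_one, q_pow]
  rw [h]
  apply RatFunc.algebraMap_ne_zero
  intro hc
  have := congrArg (Polynomial.eval 0) hc
  simp [zero_pow hm.ne'] at this

/-- membership in the localization away from `Φ_n`. -/
def Nice (n : ℕ) (x : RatFunc ℚ) : Prop :=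
  ∃ a b : Polynomial ℚ, IsCoprime b (Polynomial.cyclotomic n ℚ) ∧
    x = algebraMap (Polynomial ℚ) (RatFunc ℚ) a / algebraMap (Polynomial ℚ) (RatFunc ℚ) b

lemma coprime_ne_zero {n : ℕ} (hn : 0 < n) {b : Polynomial ℚ}
    (h : IsCoprime b (Polynomial.cyclotomic n ℚ)) : b ≠ 0 := by
  rintro rfl
  exact ((Polynomial.cyclotomic.irreducible_rat hn).not_isUnit) (isCoprime_zero_left.mp h)

lemma nice_poly (n : ℕ) (a : Polynomial ℚ) :
    Nice n (algebraMap (Polynomial ℚ) (RatFunc ℚ) a) :=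
  ⟨a, 1, isCoprime_one_left, by simp⟩

lemma nice_zero (n : ℕ) : Nice n 0 := by simpa using nice_poly n 0

lemma nice_add {n : ℕ} (hn : 0 < n) {x y : RatFunc ℚ} (hx : Nice n x) (hy : Nice n y) :
    Nice n (x + y) := by
  obtain ⟨a1, b1, h1, rfl⟩ := hx
  obtain ⟨a2, b2, h2, rfl⟩ := hy
  refine ⟨a1 * b2 + a2 * b1, b1 * b2, h1.mul_left h2, ?_⟩
  have hb1 := RatFunc.algebraMap_ne_zero (coprime_ne_zero hn h1)
  have hb2 := RatFunc.algebraMap_ne_zero (coprime_ne_zero hn h2)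
  push_cast [map_add, map_mul]
  field_simp

lemma nice_mul {n : ℕ} (hn : 0 < n) {x y : RatFunc ℚ} (hx : Nice n x) (hy : Nice n y) :
    Nice n (x * y) := by
  obtain ⟨a1, b1, h1, rfl⟩ := hx
  obtain ⟨a2, b2, h2, rfl⟩ := hy
  refine ⟨a1 * a2, b1 * b2, h1.mul_left h2, ?_⟩
  have hb1 := RatFunc.algebraMap_ne_zero (coprime_ne_zero hn h1)
  have hb2 := RatFunc.algebraMap_ne_zero (coprime_ne_zero hn h2)
  push_cast [map_mul]
  field_simp

lemma nice_div_poly {n : ℕ} (hn : 0 < n) {x : RatFunc ℚ} (hx : Nice n x)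
    {c : Polynomial ℚ} (hc : IsCoprime c (Polynomial.cyclotomic n ℚ)) :
    Nice n (x / algebraMap (Polynomial ℚ) (RatFunc ℚ) c) := by
  obtain ⟨a, b, hb, rfl⟩ := hx
  refine ⟨a, b * c, hb.mul_left hc, ?_⟩
  rw [map_mul, div_div]

lemma nice_sum_range {n : ℕ} (hn : 0 < n) {k : ℕ} {f : ℕ → RatFunc ℚ}
    (hf : ∀ i < k, Nice n (f i)) : Nice n (∑ i ∈ Finset.range k, f i) := by
  induction k with
  | zero => simpa using nice_zero n
  | succ k ih =>
    rw [Finset.sum_range_succ]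
    exact nice_add hn (ih fun i hi => hf i (by omega)) (hf k (by omega))

lemma coprime_X_pow_cyclotomic {n : ℕ} (hn : 0 < n) (m : ℕ) :
    IsCoprime ((X : Polynomial ℚ) ^ m) (Polynomial.cyclotomic n ℚ) := by
  apply IsCoprime.pow_left
  rw [Polynomial.irreducible_X.coprime_iff_not_dvd, Polynomial.X_dvd_iff]
  rcases eq_or_lt_of_le (show 1 ≤ n from hn) with h | h
  · rw [← h, Polynomial.cyclotomic_one]
    norm_num
  · rw [Polynomial.cyclotomic_coeff_zero ℚ h]
    norm_num

lemma coprime_one_sub_X_pow_cyclotomic {n j : ℕ} (hj : 0 < j) (hjn : j < n) :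
    IsCoprime (1 - (X : Polynomial ℚ) ^ j) (Polynomial.cyclotomic n ℚ) := by
  have hn : 0 < n := lt_trans hj hjn
  apply IsCoprime.symm
  rw [(Polynomial.cyclotomic.irreducible_rat hn).coprime_iff_not_dvd]
  intro hdvd
  have hmap : Polynomial.cyclotomic n ℂ ∣ (1 - (X : Polynomial ℂ) ^ j) := by
    have := Polynomial.map_dvd (algebraMap ℚ ℂ) hdvd
    simpa [Polynomial.map_cyclotomic] using this
  have hprim : IsPrimitiveRoot (Complex.exp (2 * Real.pi * Complex.I / n)) n :=
    Complex.isPrimitiveRoot_exp n hn.ne'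
  set ζ := Complex.exp (2 * Real.pi * Complex.I / n)
  have hroot : (Polynomial.cyclotomic n ℂ).IsRoot ζ := by
    haveI : NeZero (n : ℂ) := ⟨Nat.cast_ne_zero.mpr hn.ne'⟩
    exact (Polynomial.isRoot_cyclotomic_iff).mpr hprim
  obtain ⟨r, hr⟩ := hmap
  have : (1 : ℂ) - ζ ^ j = 0 := by
    have := congrArg (Polynomial.eval ζ) hr
    simpa [Polynomial.IsRoot.def.mp hroot] using this
  have hζj : ζ ^ j = 1 := by
    have h2 := sub_eq_zero.mp this
    exact h2.symm
  have hdj := (IsPrimitiveRoot.pow_eq_one_iff_dvd hprim j).mp hζj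
  exact absurd (Nat.le_of_dvd hj hdj) (by omega)

lemma nice_neg {n : ℕ} {x : RatFunc ℚ} (hx : Nice n x) : Nice n (-x) := by
  obtain ⟨a, b, hb, hx⟩ := hx
  exact ⟨-a, b, hb, by rw [hx, map_neg, neg_div]⟩

lemma nice_pow {n : ℕ} (hn : 0 < n) {x : RatFunc ℚ} (hx : Nice n x) (m : ℕ) :
    Nice n (x ^ m) := by
  induction m with
  | zero => simpa using nice_poly n 1
  | succ m ihm => rw [pow_succ]; exact nice_mul hn ihm hx

/-- Key expansion: `t · ∏ (t - u²·s_j) = t^{k+1} - u²·t^k·Σ s_j + u⁴·e` with `e` nice. -/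
lemma key_expansion {n : ℕ} (hn : 0 < n) (t u : RatFunc ℚ) (ht : Nice n t) (hu : Nice n u)
    (s : ℕ → RatFunc ℚ) (k : ℕ) (hs : ∀ i < k, Nice n (s (i + 1))) :
    ∃ e : RatFunc ℚ, Nice n e ∧
      t * ∏ i ∈ Finset.range k, (t - u ^ 2 * s (i + 1)) =
        t ^ (k + 1) - u ^ 2 * t ^ k * (∑ i ∈ Finset.range k, s (i + 1)) + u ^ 4 * e := by
  induction k with
  | zero => exact ⟨0, nice_zero n, by simp⟩
  | succ k ih =>
    obtain ⟨e, he, heq⟩ := ih (fun i hi => hs i (by omega))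
    refine ⟨t * e + s (k + 1) * t ^ k * (∑ i ∈ Finset.range k, s (i + 1)) - u ^ 2 * s (k + 1) * e,
      ?_, ?_⟩
    · have hsk := hs k (by omega)
      have hS := nice_sum_range hn (k := k) (f := fun i => s (i + 1)) (fun i hi => hs i (by omega))
      have htk : Nice n (t ^ k) := nice_pow hn ht k
      have h1 : Nice n (t * e) := nice_mul hn ht he
      have h2 : Nice n (s (k + 1) * t ^ k * (∑ i ∈ Finset.range k, s (i + 1))) :=
        nice_mul hn (nice_mul hn hsk htk) hS
      have h3 : Nice n (u ^ 2 * s (k + 1) * e) :=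
        nice_mul hn (nice_mul hn (nice_pow hn hu 2) hsk) he
      simpa [sub_eq_add_neg] using nice_add hn (nice_add hn h1 h2) (nice_neg h3)
    · rw [Finset.prod_range_succ, Finset.sum_range_succ]
      linear_combination (t - u ^ 2 * s (k + 1)) * heq
lemma qPoch_ne_zero (m : ℕ) : qPoch m ≠ 0 := by
  rw [qPoch]
  exact Finset.prod_ne_zero_iff.mpr fun i _ => one_sub_q_pow_ne_zero_s5 (Nat.succ_pos i)

lemma qPoch_add (a b : ℕ) :
    qPoch (a + b) = qPoch a * ∏ i ∈ Finset.range b, (1 - q ^ (a + i + 1)) := by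
  rw [qPoch, qPoch, Finset.prod_range_add]

lemma per_factor {n j : ℕ} (hj : 0 < j) (hjn : j < n) :
    q ^ j * ((1 - q ^ (n + j)) * (1 - q ^ (n - j))) =
      -(1 - q ^ j) ^ 2 * (q ^ n - (1 - q ^ n) ^ 2 * (q ^ j / (1 - q ^ j) ^ 2)) := by
  obtain ⟨m, rfl⟩ : ∃ m, n = j + m := ⟨n - j, by omega⟩
  have h1 : j + m - j = m := by omega
  rw [h1]
  have h2 : (1 : RatFunc ℚ) - q ^ j ≠ 0 := one_sub_q_pow_ne_zero_s5 hj
  field_simp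
  ring
lemma prodA {n k : ℕ} (hn : 0 < n) (hk : k ≤ n - 1) :
    qbinom (n + k) k * qbinom (n - 1) k =
      (∏ i ∈ Finset.range k, ((1 - q ^ (n + (i + 1))) * (1 - q ^ (n - (i + 1))))) /
        ∏ i ∈ Finset.range k, (1 - q ^ (i + 1)) ^ 2 := by
  have e1 : qPoch (n + k) = qPoch n * ∏ i ∈ Finset.range k, (1 - q ^ (n + (i + 1))) := by
    rw [qPoch_add]
    congr 1
  have e2 : qPoch (n - 1) = qPoch (n - 1 - k) * ∏ i ∈ Finset.range k, (1 - q ^ (n - (i + 1))) := by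
    obtain ⟨m, hm⟩ : ∃ m, n - 1 = m + k := ⟨n - 1 - k, by omega⟩
    rw [hm, Nat.add_sub_cancel, qPoch_add]
    congr 1
    conv_rhs => rw [← Finset.prod_range_reflect]
    apply Finset.prod_congr rfl
    intro i hi
    rw [Finset.mem_range] at hi
    congr 2
    omega
  rw [qbinom, qbinom, if_pos (Nat.le_add_left k n), if_pos hk, Nat.add_sub_cancel, e1, e2]
  have hsq : ∏ i ∈ Finset.range k, (1 - q ^ (i + 1)) ^ 2 = qPoch k ^ 2 := by
    rw [qPoch, Finset.prod_pow]
  rw [hsq, Finset.prod_mul_distrib]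
  have h1 := qPoch_ne_zero n
  have h2 := qPoch_ne_zero k
  have h3 := qPoch_ne_zero (n - 1 - k)
  field_simp
lemma gauss_sum (k : ℕ) : 2 * ∑ i ∈ Finset.range k, (i + 1) = k * (k + 1) := by
  induction k with
  | zero => simp
  | succ m ih => rw [Finset.sum_range_succ, Nat.mul_add, ih]; ring

lemma sum_Icc_shift (f : ℕ → RatFunc ℚ) (k : ℕ) :
    ∑ j ∈ Finset.Icc 1 k, f j = ∑ i ∈ Finset.range k, f (i + 1) := by
  induction k with
  | zero => simp
  | succ m ih => rw [Finset.sum_Icc_succ_top (by omega), ih, Finset.sum_range_succ]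
set_option maxHeartbeats 1000000 in
/-- Equation (2.1): main theorem. -/
theorem qbinom_prod_mod_cyclotomic_pow_four (n k : ℕ) (hn : 0 < n) (hk : k ≤ n - 1) :
    ratModEq ((Polynomial.cyclotomic n ℚ) ^ 4)
      (qbinom (n + k) k * qbinom (n - 1) k)
      ((-1) ^ k * q ^ ((n : ℤ) * (k : ℤ) - (k : ℤ) * ((k : ℤ) + 1) / 2) *
        (1 - (1 - q ^ n) ^ 2 / q ^ n *
          ∑ j ∈ Finset.Icc 1 k, q ^ j / (1 - q ^ j) ^ 2)) := by
  -- the triangular number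
  set Nk : ℕ := ∑ i ∈ Finset.range k, (i + 1) with hNk_def
  have hgauss : 2 * Nk = k * (k + 1) := gauss_sum k
  have hNk_le : Nk ≤ n * k := by
    calc Nk ≤ ∑ _i ∈ Finset.range k, n := Finset.sum_le_sum fun i hi => by
            rw [Finset.mem_range] at hi; omega
      _ = n * k := by rw [Finset.sum_const, Finset.card_range, smul_eq_mul, mul_comm]
  -- convert the integer exponent to a natural one
  have hexp : q ^ ((n : ℤ) * (k : ℤ) - (k : ℤ) * ((k : ℤ) + 1) / 2) = q ^ (n * k - Nk) := by
    have h2 : (k : ℤ) * ((k : ℤ) + 1) = 2 * (Nk : ℤ) := by exact_mod_cast hgauss.symm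
    rw [h2, Int.mul_ediv_cancel_left _ (by norm_num)]
    have h3 : (n : ℤ) * (k : ℤ) - (Nk : ℤ) = ((n * k - Nk : ℕ) : ℤ) := by push_cast; omega
    rw [h3, zpow_natCast]
  rw [hexp]
  set s : ℕ → RatFunc ℚ := fun j => q ^ j / (1 - q ^ j) ^ 2 with hs_def
  set u : RatFunc ℚ := 1 - q ^ n with hu_def
  set t : RatFunc ℚ := q ^ n with ht_def
  have hIcc : ∑ j ∈ Finset.Icc 1 k, s j = ∑ i ∈ Finset.range k, s (i + 1) :=
    sum_Icc_shift s k
  rw [hIcc]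
  set S : RatFunc ℚ := ∑ i ∈ Finset.range k, s (i + 1) with hS_def
  -- nice-ness
  have hnt : Nice n t := by
    rw [ht_def, q_pow]; exact nice_poly n _
  have hnu : Nice n u := by
    have h : u = algebraMap (Polynomial ℚ) (RatFunc ℚ) (1 - X ^ n) := by
      rw [hu_def, ht_def, map_sub, map_one, q_pow]
    rw [h]; exact nice_poly n _
  have hns : ∀ i < k, Nice n (s (i + 1)) := by
    intro i hi
    have h1 : s (i + 1) = algebraMap (Polynomial ℚ) (RatFunc ℚ) (X ^ (i + 1)) /
        algebraMap (Polynomial ℚ) (RatFunc ℚ) ((1 - X ^ (i + 1)) ^ 2) := by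
      rw [hs_def]
      simp only [map_pow, map_sub, map_one, q_pow]
    rw [h1]
    exact nice_div_poly hn (nice_poly n _)
      ((coprime_one_sub_X_pow_cyclotomic (Nat.succ_pos i) (by omega)).pow_left)
  obtain ⟨e, he, hkey⟩ := key_expansion hn t u hnt hnu s k hns
  -- the product form of the LHS
  have hA := prodA hn hk
  have hD : (∏ i ∈ Finset.range k, (1 - q ^ (i + 1)) ^ 2) ≠ 0 :=
    Finset.prod_ne_zero_iff.mpr fun i _ => pow_ne_zero _ (one_sub_q_pow_ne_zero_s5 (Nat.succ_pos i))
  have hnum : q ^ Nk * (∏ i ∈ Finset.range k, ((1 - q ^ (n + (i + 1))) * (1 - q ^ (n - (i + 1))))) =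
      (-1 : RatFunc ℚ) ^ k * (∏ i ∈ Finset.range k, (t - u ^ 2 * s (i + 1))) *
        ∏ i ∈ Finset.range k, (1 - q ^ (i + 1)) ^ 2 := by
    rw [hNk_def, ← Finset.prod_pow_eq_pow_sum, ← Finset.prod_mul_distrib]
    have hfac : ∀ i ∈ Finset.range k,
        q ^ (i + 1) * ((1 - q ^ (n + (i + 1))) * (1 - q ^ (n - (i + 1)))) =
          (-1) * ((1 - q ^ (i + 1)) ^ 2 * (t - u ^ 2 * s (i + 1))) := by
      intro i hi
      rw [Finset.mem_range] at hi
      rw [per_factor (j := i + 1) (by omega) (by omega), hu_def, ht_def]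
      simp only [hs_def]
      ring
    rw [Finset.prod_congr rfl hfac, Finset.prod_mul_distrib, Finset.prod_const,
      Finset.card_range, Finset.prod_mul_distrib]
    ring
  have hqNA : q ^ Nk * (qbinom (n + k) k * qbinom (n - 1) k) =
      (-1 : RatFunc ℚ) ^ k * ∏ i ∈ Finset.range k, (t - u ^ 2 * s (i + 1)) := by
    rw [hA, ← mul_div_assoc, hnum, mul_div_cancel_right₀ _ hD]
  -- powers bookkeeping
  have ht0 : t ≠ 0 := pow_ne_zero _ q_ne_zero
  have hQ0 : (q : RatFunc ℚ) ^ Nk ≠ 0 := pow_ne_zero _ q_ne_zero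
  have hM : q ^ Nk * q ^ (n * k - Nk) = t ^ k := by
    rw [← pow_add, ht_def, ← pow_mul]
    congr 1
    omega
  set BB : RatFunc ℚ := (-1) ^ k * q ^ (n * k - Nk) * (1 - u ^ 2 / t * S) with hBB_def
  set AA : RatFunc ℚ := qbinom (n + k) k * qbinom (n - 1) k with hAA_def
  have h1 : t * (q ^ Nk * AA) = (-1 : RatFunc ℚ) ^ k *
      (t ^ (k + 1) - u ^ 2 * t ^ k * S + u ^ 4 * e) := by
    rw [hAA_def, hqNA]
    linear_combination ((-1 : RatFunc ℚ)) ^ k * hkey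
  have hdivt : t * (1 - u ^ 2 / t * S) = t - u ^ 2 * S := by
    field_simp
  have h2 : t * (q ^ Nk * BB) = (-1 : RatFunc ℚ) ^ k * (t ^ (k + 1) - u ^ 2 * t ^ k * S) := by
    calc t * (q ^ Nk * BB)
        = (-1 : RatFunc ℚ) ^ k * ((q ^ Nk * q ^ (n * k - Nk)) * (t * (1 - u ^ 2 / t * S))) := by
          rw [hBB_def]; ring
      _ = (-1 : RatFunc ℚ) ^ k * (t ^ k * (t - u ^ 2 * S)) := by rw [hM, hdivt]
      _ = (-1 : RatFunc ℚ) ^ k * (t ^ (k + 1) - u ^ 2 * t ^ k * S) := by ring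
  have hkey2 : (t * q ^ Nk) * (AA - BB) = (-1 : RatFunc ℚ) ^ k * (u ^ 4 * e) := by
    linear_combination h1 - h2
  have hAB : AA - BB = (-1 : RatFunc ℚ) ^ k * (u ^ 4 * e) / (t * q ^ Nk) := by
    rw [eq_div_iff (mul_ne_zero ht0 hQ0)]
    linear_combination hkey2
  -- split off the cyclotomic part of u
  obtain ⟨c, hc⟩ : (Polynomial.cyclotomic n ℚ) ∣ (1 - X ^ n) := by
    have h := (Polynomial.cyclotomic.dvd_X_pow_sub_one n ℚ).neg_right
    rwa [neg_sub] at h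
  have hu_alg : u = algebraMap (Polynomial ℚ) (RatFunc ℚ) (Polynomial.cyclotomic n ℚ) *
      algebraMap (Polynomial ℚ) (RatFunc ℚ) c := by
    rw [hu_def, ht_def, show (1 : RatFunc ℚ) - q ^ n =
      algebraMap (Polynomial ℚ) (RatFunc ℚ) (1 - X ^ n) from by rw [map_sub, map_one, q_pow],
      hc, map_mul]
  have hty : t * q ^ Nk = q ^ (n + Nk) := by rw [ht_def, pow_add]
  have hq4 : (q : RatFunc ℚ) ^ (n + Nk) ≠ 0 := pow_ne_zero _ q_ne_zero
  set y : RatFunc ℚ := (-1) ^ k * (algebraMap (Polynomial ℚ) (RatFunc ℚ) c) ^ 4 * e /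
      q ^ (n + Nk) with hy_def
  have hdecomp : AA - BB =
      algebraMap (Polynomial ℚ) (RatFunc ℚ) (Polynomial.cyclotomic n ℚ) ^ 4 * y := by
    rw [hAB, hu_alg, hty, hy_def]
    conv_rhs => rw [← mul_div_assoc]
    congr 1
    ring
  have hny : Nice n y := by
    rw [hy_def]
    have h1 : Nice n ((-1 : RatFunc ℚ) ^ k) := by
      have hneg : (-1 : RatFunc ℚ) = algebraMap (Polynomial ℚ) (RatFunc ℚ) (-1) := by simp
      exact nice_pow hn (hneg ▸ nice_poly n (-1)) k
    have h2 : Nice n ((algebraMap (Polynomial ℚ) (RatFunc ℚ) c) ^ 4) := by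
      rw [← map_pow]; exact nice_poly n _
    have h3 := nice_mul hn (nice_mul hn h1 h2) he
    rw [show (q : RatFunc ℚ) ^ (n + Nk) =
      algebraMap (Polynomial ℚ) (RatFunc ℚ) (X ^ (n + Nk)) from q_pow _]
    exact nice_div_poly hn h3 (coprime_X_pow_cyclotomic hn _)
  obtain ⟨a', b', hb', hy'⟩ := hny
  refine ⟨(Polynomial.cyclotomic n ℚ) ^ 4 * a', b', hb'.pow_right, dvd_mul_right _ _, ?_⟩
  rw [hdecomp, hy', map_mul, map_pow, mul_div_assoc]
end
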